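/- arXiv:1505.07959 — 2 statements merged into one kernel-verified Lean document; each statement's English description precedes it below -/
import Mathlib

section
/- (Correctness of the paraexp decomposition.) Let A ∈ M_n(ℝ), let g : ℝ → ℝⁿ be continuous, u₀ ∈ ℝⁿ, and let 0 = T_0 < T_1 < ⋯ < T_p = T be a partition of [0,T]. For j = 1,…,p let v_j : [T_{j-1},T_j] → ℝⁿ solve v_j′ = A v_j + g with v_j(T_{j-1}) = 0, and let w_j : [T_{j-1},T] → ℝⁿ solve w_j′ = A w_j with w_1(T_0) = u₀ and w_j(T_{j-1}) = v_{j-1}(T_{j-1}) for j ≥ 2 (where v_{j-1}(T_{j-1}) is the endpoint value of v_{j-1}). Then the unique solution u of u′ = A u + g, u(0) = u₀, satisfies u(t) = v_k(t) + Σ_{j=1}^k w_j(t) for every k ∈ {1,…,p} and every t ∈ [T_{k-1},T_k]. -/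
open Matrix

/-- Correctness of the paraexp decomposition.  Let `A ∈ M_n(ℝ)`, `g : ℝ → ℝⁿ`
continuous, `u₀ ∈ ℝⁿ`, and `0 = T_0 < T_1 < ⋯ < T_p` a partition.  For each
`j` (here zero-based: `j = 0,…,p−1` stands for the paper's `j+1`), let `v j`
solve `v′ = A v + g` on `[T_j, T_{j+1}]` with `v j (T_j) = 0`, and let `w j`
solve `w′ = A w` on `[T_j, T_p]` with `w 0 (T_0) = u₀` and
`w j (T_j) = v (j−1) (T_j)` for `j ≥ 1`.  Then the solution `u` of
`u′ = A u + g`, `u(0) = u₀`, satisfies `u(t) = v k t + Σ_{j ≤ k} w j t` for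
every `k` and every `t ∈ [T_k, T_{k+1}]`. -/
theorem paraexp_decomposition {n p : ℕ} (A : Matrix (Fin n) (Fin n) ℝ)
    (g : ℝ → Fin n → ℝ) (hg : Continuous g) (u₀ : Fin n → ℝ)
    (T : Fin (p + 1) → ℝ) (hT0 : T 0 = 0) (hTmono : StrictMono T)
    (v w : Fin p → ℝ → Fin n → ℝ)
    (hv : ∀ j : Fin p, ∀ t ∈ Set.Icc (T j.castSucc) (T j.succ),
      HasDerivWithinAt (v j) (A.mulVec (v j t) + g t)
        (Set.Icc (T j.castSucc) (T j.succ)) t)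
    (hv0 : ∀ j : Fin p, v j (T j.castSucc) = 0)
    (hw : ∀ j : Fin p, ∀ t ∈ Set.Icc (T j.castSucc) (T (Fin.last p)),
      HasDerivWithinAt (w j) (A.mulVec (w j t))
        (Set.Icc (T j.castSucc) (T (Fin.last p))) t)
    (hw0 : ∀ h : 0 < p, w ⟨0, h⟩ (T 0) = u₀)
    (hwj : ∀ j i : Fin p, (i : ℕ) + 1 = (j : ℕ) →
      w j (T j.castSucc) = v i (T j.castSucc))
    (u : ℝ → Fin n → ℝ)
    (hu : ∀ t : ℝ, HasDerivAt u (A.mulVec (u t) + g t) t) (hu0 : u 0 = u₀) :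
    ∀ k : Fin p, ∀ t ∈ Set.Icc (T k.castSucc) (T k.succ),
      u t = v k t + ∑ j ∈ Finset.Iic k, w j t := by
  classical
  -- the (continuous linear) map `x ↦ A.mulVec x`
  set L : (Fin n → ℝ) →L[ℝ] (Fin n → ℝ) := (Matrix.mulVecLin A).toContinuousLinearMap with hLdef
  have hLA : ∀ x, L x = A.mulVec x := fun x => rfl
  -- the vector field is Lipschitz in the space variable
  have hlip : ∀ t : ℝ, LipschitzOnWith ‖L‖₊ (fun x => A.mulVec x + g t)
      (Set.univ : Set (Fin n → ℝ)) := by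
    intro t
    refine LipschitzWith.lipschitzOnWith ?_
    intro x y
    have := L.lipschitz x y
    simpa [hLA, edist_add_right] using this
  -- key step: if `u` agrees with the decomposition at the left endpoint, it agrees
  -- on the whole subinterval
  have key : ∀ k : Fin p,
      u (T k.castSucc) = v k (T k.castSucc) + ∑ j ∈ Finset.Iic k, w j (T k.castSucc) →
      Set.EqOn u (fun t => v k t + ∑ j ∈ Finset.Iic k, w j t)
        (Set.Icc (T k.castSucc) (T k.succ)) := by
    intro k hinit
    set a := T k.castSucc with ha
    set b := T k.succ with hb
    have hab : a < b := hTmono (Fin.castSucc_lt_succ (i := k))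
    set z : ℝ → Fin n → ℝ := fun t => v k t + ∑ j ∈ Finset.Iic k, w j t with hzdef
    have hsub : ∀ j : Fin p, j ≤ k →
        Set.Icc a b ⊆ Set.Icc (T j.castSucc) (T (Fin.last p)) := by
      intro j hj
      apply Set.Icc_subset_Icc
      · exact hTmono.monotone (Fin.castSucc_le_castSucc_iff.mpr hj)
      · exact hTmono.monotone (Fin.le_last _)
    have hz' : ∀ t ∈ Set.Icc a b,
        HasDerivWithinAt z (A.mulVec (z t) + g t) (Set.Icc a b) t := by
      intro t ht
      have h2 : HasDerivWithinAt (fun t => ∑ j ∈ Finset.Iic k, w j t)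
          (∑ j ∈ Finset.Iic k, A.mulVec (w j t)) (Set.Icc a b) t :=
        HasDerivWithinAt.fun_sum fun j hj =>
          (hw j t (hsub j (Finset.mem_Iic.mp hj) ht)).mono
            (hsub j (Finset.mem_Iic.mp hj))
      have h3 := (hv k t ht).add h2
      refine h3.congr_deriv ?_
      have hsum : A.mulVec (∑ j ∈ Finset.Iic k, w j t)
          = ∑ j ∈ Finset.Iic k, A.mulVec (w j t) := by
        simpa [hLA] using map_sum L (fun j => w j t) (Finset.Iic k)
      simp only [hzdef, Matrix.mulVec_add, hsum]
      abel_nf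
    have hcu : ContinuousOn u (Set.Icc a b) := fun t _ =>
      (hu t).continuousAt.continuousWithinAt
    have hcz : ContinuousOn z (Set.Icc a b) := fun t ht => (hz' t ht).continuousWithinAt
    refine ODE_solution_unique_of_mem_Icc_right (fun t _ => hlip t) hcu ?_ (fun t _ => trivial)
      hcz ?_ (fun t _ => trivial) hinit
    · intro t ht
      exact (hu t).hasDerivWithinAt
    · intro t ht
      exact (hz' t ⟨ht.1, ht.2.le⟩).mono_of_mem_nhdsWithin
        (Icc_mem_nhdsGE_of_mem ⟨ht.1, ht.2⟩)
  -- now an induction on `k` establishes the initial condition at each `T k`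
  suffices H : ∀ m : ℕ, ∀ k : Fin p, (k : ℕ) = m →
      Set.EqOn u (fun t => v k t + ∑ j ∈ Finset.Iic k, w j t)
        (Set.Icc (T k.castSucc) (T k.succ)) by
    intro k t ht
    exact H k k rfl ht
  intro m
  induction m with
  | zero =>
    intro k hk
    apply key
    have hcs : k.castSucc = 0 := by
      ext
      simpa using hk
    have hIic : Finset.Iic k = {k} := by
      ext j
      simp [Fin.le_def, Fin.ext_iff, hk, Nat.le_zero]
    have hkk : k = ⟨0, k.pos⟩ := by
      ext
      simpa using hk
    rw [hIic, Finset.sum_singleton, hv0 k, hcs, hkk, hw0 k.pos, hT0, hu0]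
    simp
  | succ m ih =>
    intro k hk
    apply key
    have hmp : m < p := by
      have := k.isLt
      omega
    set i : Fin p := ⟨m, hmp⟩ with hi
    have hisucc : i.succ = k.castSucc := by
      ext
      simp [hi, hk]
    have hIH := ih i rfl
    have hmem : T k.castSucc ∈ Set.Icc (T i.castSucc) (T i.succ) := by
      constructor
      · exact hTmono.monotone (by rw [← hisucc]; exact (Fin.castSucc_lt_succ (i := i)).le)
      · rw [hisucc]
    have huval := hIH hmem
    have hins : Finset.Iic k = insert k (Finset.Iic i) := by
      ext j
      simp only [Finset.mem_Iic, Finset.mem_insert, Fin.le_def, Fin.ext_iff, hk, hi]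
      omega
    have hknotin : k ∉ Finset.Iic i := by
      simp [Finset.mem_Iic, Fin.le_def, hk, hi]
    rw [hins, Finset.sum_insert hknotin, hv0 k,
      hwj k i (by simp [hi, hk]), huval]
    abel_nf
end

section
/- Let a > 0 and b, x₀ ∈ ℝ with a x₀ ≠ b, and let u : ℝ → ℝ be continuous. Let x solve x′ = b − a x, x(0) = x₀, and let y solve y′ = b − a y + u(t), y(0) = x₀. Then lim_{t→+∞} (a y(t) − b)/(a x(t) − b) = 0 if and only if lim_{t→+∞} ∫₀ᵗ e^{as} u(s) ds = (b − a x₀)/a. -/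
/-!
Multiplying by the integrating factor `e^{at}`, the deviations from the equilibrium `b/a` become
`e^{at}(x t - b/a) = c` and `e^{at}(y t - b/a) = c + ∫₀ᵗ e^{as} u(s) ds`, where `c = x₀ - b/a ≠ 0`.
Hence the residual ratio is exactly `(c + ∫₀ᵗ e^{as} u(s) ds) / c`, which tends to `0` iff the
integral tends to `-c = (b - a x₀)/a`.
-/

open Filter Real Topology

theorem tendsto_const_add_div_self_nhds_zero_iff {α 𝕜 : Type*} [Field 𝕜] [TopologicalSpace 𝕜]
    [IsTopologicalRing 𝕜] {l : Filter α} {g : α → 𝕜} {c : 𝕜} (hc : c ≠ 0) :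
    Tendsto (fun t => (c + g t) / c) l (𝓝 0) ↔ Tendsto g l (𝓝 (-c)) := by
  constructor
  · intro h
    simpa [mul_div_cancel₀ _ hc] using (h.const_mul c).sub_const c
  · intro h
    simpa [hc] using (h.const_add c).div_const c

section LinearODE

variable {a b : ℝ} {z f : ℝ → ℝ}

theorem hasDerivAt_exp_mul_mul_sub_div (ha : a ≠ 0) {t : ℝ}
    (hz : HasDerivAt z (b - a * z t + f t) t) :
    HasDerivAt (fun s => exp (a * s) * (z s - b / a)) (exp (a * t) * f t) t := by
  have hexp : HasDerivAt (fun s => exp (a * s)) (exp (a * t) * a) t := by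
    simpa using ((hasDerivAt_id t).const_mul a).exp
  refine (hexp.mul (hz.sub_const (b / a))).congr_deriv ?_
  field_simp
  ring

theorem exp_mul_mul_sub_div_eq_add_integral (ha : a ≠ 0) (hf : Continuous f)
    (hz : ∀ t, HasDerivAt z (b - a * z t + f t) t) (t : ℝ) :
    exp (a * t) * (z t - b / a) = (z 0 - b / a) + ∫ s in (0 : ℝ)..t, exp (a * s) * f s := by
  have hint : Continuous fun s => exp (a * s) * f s := by fun_prop
  rw [intervalIntegral.integral_eq_sub_of_hasDerivAt
    (fun s _ => hasDerivAt_exp_mul_mul_sub_div ha (hz s)) (hint.intervalIntegrable 0 t)]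
  simp

end LinearODE

/-- Acceleration-of-convergence criterion.  With `x, y` as in the residual
ratio formula, `lim_{t→∞} (a y(t) − b)/(a x(t) − b) = 0` iff
`lim_{t→∞} ∫₀ᵗ e^{as} u(s) ds = (b − a x₀)/a`. -/
theorem acceleration_criterion (a b x₀ : ℝ) (ha : 0 < a) (hx₀ : a * x₀ ≠ b)
    (u : ℝ → ℝ) (hu : Continuous u)
    (x : ℝ → ℝ) (hx : ∀ t : ℝ, HasDerivAt x (b - a * x t) t) (hx0 : x 0 = x₀)
    (y : ℝ → ℝ) (hy : ∀ t : ℝ, HasDerivAt y (b - a * y t + u t) t)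
    (hy0 : y 0 = x₀) :
    Tendsto (fun t => (a * y t - b) / (a * x t - b)) atTop (nhds 0) ↔
      Tendsto (fun t => ∫ s in (0 : ℝ)..t, Real.exp (a * s) * u s) atTop
        (nhds ((b - a * x₀) / a)) := by
  have ha₀ := ha.ne'
  set c := x₀ - b / a
  have hc : c ≠ 0 := by
    contrapose! hx₀
    rw [sub_eq_zero.mp hx₀, mul_div_cancel₀ _ ha₀]
  have hxsol (t : ℝ) : exp (a * t) * (x t - b / a) = c := by
    rw [exp_mul_mul_sub_div_eq_add_integral (f := 0) ha₀ continuous_const (by simpa using hx) t,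
      hx0]
    simp [c]
  have hysol := exp_mul_mul_sub_div_eq_add_integral ha₀ hu hy
  have hratio (t : ℝ) : (a * y t - b) / (a * x t - b)
      = (c + ∫ s in (0 : ℝ)..t, exp (a * s) * u s) / c := calc
    _ = a * (y t - b / a) / (a * (x t - b / a)) := by simp only [mul_sub, mul_div_cancel₀ _ ha₀]
    _ = exp (a * t) * (y t - b / a) / (exp (a * t) * (x t - b / a)) := by
      rw [mul_div_mul_left _ _ ha₀, mul_div_mul_left _ _ (exp_ne_zero _)]
    _ = _ := by rw [hxsol, hysol, hy0]
  have hlimit : (b - a * x₀) / a = -c := by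
    simp only [c]
    field_simp
    ring
  simp_rw [hratio, hlimit]
  exact tendsto_const_add_div_self_nhds_zero_iff hc
end
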